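/- Let A_k := Π_{i=1}^4 (a_i^2;p_i)_k / (K/a_i^2; L/p_i)_k where K = a_1a_2a_3a_4 and L = √(p_1p_2p_3p_4). Then for every k ≥ 1, A_k - A_{k-1} = Γ_{k-1} · (K L^{k-1} - 1)/(K L^{k-1}) · Π_{i=1}^4 (a_i^2;p_i)_{k-1} / (K/a_i^2; L/p_i)_k, where Γ_m := (a_1a_2(p_1p_2)^{m/2} - a_3a_4(p_3p_4)^{m/2})(a_1a_3(p_1p_3)^{m/2} - a_2a_4(p_2p_4)^{m/2})(a_1a_4(p_1p_4)^{m/2} - a_2a_3(p_2p_3)^{m/2}). -/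

import Mathlib

open Finset

/-- The q-shifted factorial `(a;q)_k`. -/
noncomputable def qPoch (a q : ℂ) (k : ℕ) : ℂ := ∏ j ∈ Finset.range k, (1 - a * q ^ j)

/-!
Put `xᵢ = aᵢ sᵢ^m` and `X = x₁x₂x₃x₄ = K L^m`. Passing from `A_m` to `A_{m+1}` multiplies the
numerator of `A` by `∏ (1 - xᵢ²)` and its denominator by `∏ (1 - X/xᵢ²)`, so
`A_{m+1} - A_m` is the difference of these two products times the quotient on the right-hand
side. After clearing denominators that difference factors as `Γ_m (X - 1) / X`, a polynomial
identity in `x₁, …, x₄`.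
-/

theorem prod_one_sub_sq_sub_prod_one_sub_div_sq {F : Type*} [Field F] {x1 x2 x3 x4 : F}
    (h1 : x1 ≠ 0) (h2 : x2 ≠ 0) (h3 : x3 ≠ 0) (h4 : x4 ≠ 0) :
    (1 - x1 ^ 2) * (1 - x2 ^ 2) * (1 - x3 ^ 2) * (1 - x4 ^ 2)
      - (1 - x1 * x2 * x3 * x4 / x1 ^ 2) * (1 - x1 * x2 * x3 * x4 / x2 ^ 2) *
        (1 - x1 * x2 * x3 * x4 / x3 ^ 2) * (1 - x1 * x2 * x3 * x4 / x4 ^ 2) =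
    (x1 * x2 - x3 * x4) * (x1 * x3 - x2 * x4) * (x1 * x4 - x2 * x3) *
      ((x1 * x2 * x3 * x4 - 1) / (x1 * x2 * x3 * x4)) := by
  field_simp
  ring

theorem mul_div_mul_sub_div {F : Type*} [Field F] {N D u v : F} (h : D * v ≠ 0) :
    N * u / (D * v) - N / D = (u - v) * (N / (D * v)) := by
  have hD : D ≠ 0 := left_ne_zero_of_mul h
  have hv : v ≠ 0 := right_ne_zero_of_mul h
  field_simp

theorem div_sq_mul_div_sq_pow {F : Type*} [Field F] (K L a s : F) (m : ℕ) :
    K / a ^ 2 * (L / s ^ 2) ^ m = K * L ^ m / (a * s ^ m) ^ 2 := by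
  ring

theorem sq_mul_sq_pow {R : Type*} [CommMonoid R] (a s : R) (m : ℕ) :
    a ^ 2 * (s ^ 2) ^ m = (a * s ^ m) ^ 2 := by
  rw [mul_pow, ← pow_mul, ← pow_mul, mul_comm 2 m]

theorem qPoch_succ (a q : ℂ) (k : ℕ) : qPoch a q (k + 1) = qPoch a q k * (1 - a * q ^ k) :=
  prod_range_succ _ k

theorem qPoch_mul_four_succ (a1 a2 a3 a4 q1 q2 q3 q4 : ℂ) (k : ℕ) :
    qPoch a1 q1 (k + 1) * qPoch a2 q2 (k + 1) * qPoch a3 q3 (k + 1) * qPoch a4 q4 (k + 1) =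
      qPoch a1 q1 k * qPoch a2 q2 k * qPoch a3 q3 k * qPoch a4 q4 k *
        ((1 - a1 * q1 ^ k) * (1 - a2 * q2 ^ k) * (1 - a3 * q3 ^ k) * (1 - a4 * q4 ^ k)) := by
  simp only [qPoch_succ]
  ring

/-- Backward-difference evaluation of
`A_k = ∏ᵢ (aᵢ²;pᵢ)_k / (K/aᵢ²; L/pᵢ)_k` (the key identity for the eight-base
Abel-summation transformations). Here `sᵢ` is a fixed square root of `pᵢ`, so
`L = √(p₁p₂p₃p₄) = s₁s₂s₃s₄` and `(pᵢpⱼ)^{m/2} = (sᵢsⱼ)^m`. -/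
theorem backward_difference_A
    (a1 a2 a3 a4 s1 s2 s3 s4 p1 p2 p3 p4 K L : ℂ)
    (A : ℕ → ℂ) (Γ : ℕ → ℂ)
    (ha1 : a1 ≠ 0) (ha2 : a2 ≠ 0) (ha3 : a3 ≠ 0) (ha4 : a4 ≠ 0)
    (hs1 : s1 ≠ 0) (hs2 : s2 ≠ 0) (hs3 : s3 ≠ 0) (hs4 : s4 ≠ 0)
    (hp1 : s1 ^ 2 = p1) (hp2 : s2 ^ 2 = p2) (hp3 : s3 ^ 2 = p3) (hp4 : s4 ^ 2 = p4)
    (hK : K = a1 * a2 * a3 * a4) (hL : L = s1 * s2 * s3 * s4)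
    (hA : ∀ k : ℕ, A k =
      (qPoch (a1 ^ 2) p1 k * qPoch (a2 ^ 2) p2 k * qPoch (a3 ^ 2) p3 k * qPoch (a4 ^ 2) p4 k) /
        (qPoch (K / a1 ^ 2) (L / p1) k * qPoch (K / a2 ^ 2) (L / p2) k *
          qPoch (K / a3 ^ 2) (L / p3) k * qPoch (K / a4 ^ 2) (L / p4) k))
    (hΓ : ∀ m : ℕ, Γ m =
      (a1 * a2 * (s1 * s2) ^ m - a3 * a4 * (s3 * s4) ^ m) *
        (a1 * a3 * (s1 * s3) ^ m - a2 * a4 * (s2 * s4) ^ m) *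
        (a1 * a4 * (s1 * s4) ^ m - a2 * a3 * (s2 * s3) ^ m))
    (hden : ∀ k : ℕ, qPoch (K / a1 ^ 2) (L / p1) k * qPoch (K / a2 ^ 2) (L / p2) k *
      qPoch (K / a3 ^ 2) (L / p3) k * qPoch (K / a4 ^ 2) (L / p4) k ≠ 0) :
    ∀ k : ℕ, 1 ≤ k →
      A k - A (k - 1) =
        Γ (k - 1) * ((K * L ^ (k - 1) - 1) / (K * L ^ (k - 1))) *
          ((qPoch (a1 ^ 2) p1 (k - 1) * qPoch (a2 ^ 2) p2 (k - 1) *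
              qPoch (a3 ^ 2) p3 (k - 1) * qPoch (a4 ^ 2) p4 (k - 1)) /
            (qPoch (K / a1 ^ 2) (L / p1) k * qPoch (K / a2 ^ 2) (L / p2) k *
              qPoch (K / a3 ^ 2) (L / p3) k * qPoch (K / a4 ^ 2) (L / p4) k)) := by
  intro k hk
  obtain ⟨m, rfl⟩ : ∃ m, k = m + 1 := ⟨k - 1, by omega⟩
  subst hp1 hp2 hp3 hp4
  have hx {a s : ℂ} (ha : a ≠ 0) (hs : s ≠ 0) : a * s ^ m ≠ 0 := mul_ne_zero ha (pow_ne_zero m hs)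
  have hX : K * L ^ m = a1 * s1 ^ m * (a2 * s2 ^ m) * (a3 * s3 ^ m) * (a4 * s4 ^ m) := by
    rw [hK, hL]; ring
  have hΓm : Γ m = (a1 * s1 ^ m * (a2 * s2 ^ m) - a3 * s3 ^ m * (a4 * s4 ^ m)) *
      (a1 * s1 ^ m * (a3 * s3 ^ m) - a2 * s2 ^ m * (a4 * s4 ^ m)) *
      (a1 * s1 ^ m * (a4 * s4 ^ m) - a2 * s2 ^ m * (a3 * s3 ^ m)) := by
    rw [hΓ]; ring
  have hD := hden (m + 1)
  rw [qPoch_mul_four_succ] at hD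
  rw [Nat.add_sub_cancel, hA, hA, qPoch_mul_four_succ, qPoch_mul_four_succ,
    mul_div_mul_sub_div hD]
  congr 1
  simp only [sq_mul_sq_pow, div_sq_mul_div_sq_pow, hX, hΓm]
  exact prod_one_sub_sq_sub_prod_one_sub_div_sq (hx ha1 hs1) (hx ha2 hs2) (hx ha3 hs3) (hx ha4 hs4)
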